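/- arXiv:0705.4681 — 4 statements merged into one kernel-verified Lean document; each statement's English description precedes it below -/
import Mathlib

section
/- For a free group F(a_1,...,a_k) with k ≥ 2, the number of cyclically reduced words of length n is exactly (2k-1)^n + 1 + (k-1)(1 + (-1)^n). -/
open Filter

/-- The alphabet `{a_1,...,a_k}^{±1}` of the free group `F(a_1,...,a_k)`. -/
abbrev Letter (k : ℕ) := Fin k × Bool

/-- Formal inverse of a letter. -/
def linv {k : ℕ} (x : Letter k) : Letter k := (x.1, !x.2)

/-- A word is freely reduced if no letter is followed by its inverse. -/
def Reduced {k : ℕ} (w : List (Letter k)) : Prop :=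
  w.Chain' (fun x y => y ≠ linv x)

/-- A word is cyclically reduced if all its cyclic permutations are reduced. -/
def CyclRed {k : ℕ} (w : List (Letter k)) : Prop :=
  ∀ r : ℕ, Reduced (w.rotate r)

/-- The set of cyclically reduced words in `F(a_1,...,a_k)`. -/
def Ck (k : ℕ) : Set (List (Letter k)) := {w | CyclRed w}

/-- `gam Q n` is the number of words of length `n` in `Q`. -/
noncomputable def gam {k : ℕ} (Q : Set (List (Letter k))) (n : ℕ) : ℕ :=
  Nat.card {w : List (Letter k) // w ∈ Q ∧ w.length = n}

/-!
A word `w` is cyclically reduced iff `w ++ w` is reduced, i.e. iff `w`, read after its own last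
letter, is a closed walk in the digraph on the `2k` letters with an edge `x → y` whenever
`y ≠ x⁻¹`. So the count is `trace (A ^ n)` for the non-backtracking matrix `A = J - P`, where
`J` is the all-ones matrix and `P` the permutation matrix of inversion. From `J² = 2k • J`,
`PJ = JP = J` and `P² = 1` we get `A² = (2k - 2) • J + 1` and `AJ = (2k - 1) • J`, hence
`trace (A ^ (n + 2)) = trace (A ^ n) + 2k (2k - 2) (2k - 1) ^ n`, and the formula follows by
induction from `trace (A ^ 0) = trace A = 2k`.
-/

open Matrix

theorem List.rotate_infix_append_self {α : Type*} (l : List α) (n : ℕ) :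
    l.rotate n <:+: l ++ l := by
  rw [List.rotate_eq_drop_append_take_mod]
  refine ⟨l.take (n % l.length), l.drop (n % l.length), ?_⟩
  simp only [List.append_assoc, List.take_append_drop]
  rw [← List.append_assoc, List.take_append_drop]

section Walks

variable {α : Type*} (r : α → α → Prop)

def walks (n : ℕ) (a b : α) : Set (List α) :=
  {l | l.length = n ∧ (a :: l).IsChain r ∧ (a :: l).getLast? = some b}

instance [Finite α] {n : ℕ} {a b : α} : Finite (walks r n a b) :=
  ((List.finite_length_eq α n).subset fun _ h => h.1).to_subtype

def walksSuccEquiv (n : ℕ) (a b : α) :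
    walks r (n + 1) a b ≃ Σ c : {c // r a c}, walks r n c b where
  toFun
    | ⟨c :: l, hl, hr, hb⟩ => ⟨⟨c, (List.isChain_cons_cons.1 hr).1⟩,
        ⟨l, by simpa using hl, (List.isChain_cons_cons.1 hr).2, by simpa using hb⟩⟩
  invFun p := ⟨p.1.1 :: p.2.1, by simp [p.2.2.1], List.isChain_cons_cons.2 ⟨p.1.2, p.2.2.2.1⟩,
    by simpa using p.2.2.2.2⟩
  left_inv
    | ⟨_ :: _, _, _, _⟩ => rfl
  right_inv _ := rfl

variable [Fintype α] [DecidableRel r]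

def adjMatrix (R : Type*) [Zero R] [One R] : Matrix α α R :=
  Matrix.of fun a b => if r a b then 1 else 0

theorem card_walks_eq_pow_apply [DecidableEq α] {R : Type*} [Semiring R] (n : ℕ) (a b : α) :
    (Nat.card (walks r n a b) : R) = (adjMatrix r R ^ n) a b := by
  induction n generalizing a with
  | zero =>
    by_cases hab : a = b
    · subst hab
      rw [pow_zero, one_apply_eq, ← Nat.cast_one,
        Nat.card_eq_one_iff_exists.2 ⟨⟨[], rfl, by simp, rfl⟩, ?_⟩]
      rintro ⟨l, hl, -⟩
      exact Subtype.ext (List.length_eq_zero_iff.1 hl)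
    · rw [pow_zero, one_apply_ne hab, Nat.card_eq_zero.2 (.inl ⟨?_⟩), Nat.cast_zero]
      rintro ⟨l, hl, -, hb⟩
      simp_all [List.length_eq_zero_iff]
  | succ n ih =>
    rw [Nat.card_congr (walksSuccEquiv r n a b), Nat.card_sigma, Nat.cast_sum, pow_succ', mul_apply]
    simp only [ih, adjMatrix, of_apply, ite_mul, one_mul, zero_mul]
    rw [← Finset.sum_filter, ← Finset.sum_subtype_eq_sum_filter, Finset.subtype_univ]

end Walks

section Letters

variable {k : ℕ}

@[simp]
theorem linv_linv (x : Letter k) : linv (linv x) = x := by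
  simp [linv]

theorem ne_linv_self (x : Letter k) : x ≠ linv x := by
  simp [linv, Prod.ext_iff]

theorem eq_linv_comm {x y : Letter k} : y = linv x ↔ x = linv y := by
  constructor <;> rintro rfl <;> simp

theorem cyclRed_iff_reduced_append_self (w : List (Letter k)) :
    CyclRed w ↔ Reduced (w ++ w) := by
  refine ⟨fun h => ?_, fun h n => h.infix (w.rotate_infix_append_self n)⟩
  obtain _ | ⟨a, t⟩ := w
  · exact h 0
  have hw : Reduced (a :: t) := by simpa using h 0
  refine hw.append hw ?_
  simp only [List.head?_cons, Option.mem_def, Option.some.injEq, forall_eq']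
  intro x hx
  cases t with
  | nil =>
    obtain rfl : a = x := by simpa using hx
    exact ne_linv_self a
  | cons b t =>
    have h1 : Reduced (b :: t ++ [a]) := by simpa using h 1
    exact (List.isChain_append.1 h1).2.2 x (by simpa using hx) a rfl

theorem cyclRed_iff_isChain_cons {w : List (Letter k)} {a : Letter k} (ha : w.getLast? = some a) :
    CyclRed w ↔ (a :: w).IsChain (fun x y => y ≠ linv x) := by
  rw [cyclRed_iff_reduced_append_self, Reduced, List.Chain', List.isChain_append, List.isChain_cons,
    ha]
  simp only [Option.mem_def, Option.some.injEq, forall_eq']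
  tauto

def cyclRedEquivClosedWalks (n : ℕ) : {w // w ∈ Ck k ∧ w.length = n + 1} ≃
    {p : Letter k × List (Letter k) //
      p.2 ∈ walks (fun x y => y ≠ linv x) (n + 1) p.1 p.1} where
  toFun w :=
    have hw := List.ne_nil_of_length_eq_add_one w.2.2
    ⟨(w.1.getLast hw, w.1), w.2.2,
      (cyclRed_iff_isChain_cons (List.getLast?_eq_some_getLast hw)).1 w.2.1,
      by rw [List.getLast?_cons_of_ne_nil hw, List.getLast?_eq_some_getLast hw]⟩
  invFun p :=
    have hp := List.getLast?_cons_of_ne_nil (x := p.1.1) (List.ne_nil_of_length_eq_add_one p.2.1)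
    ⟨p.1.2, (cyclRed_iff_isChain_cons (hp ▸ p.2.2.2)).2 p.2.2.1, p.2.1⟩
  left_inv _ := rfl
  right_inv p := by
    have hne := List.ne_nil_of_length_eq_add_one p.2.1
    have hp := p.2.2.2
    rw [List.getLast?_cons_of_ne_nil hne, ← List.getLast_eq_iff_getLast?_eq_some hne] at hp
    exact Subtype.ext (Prod.ext hp rfl)

variable (k) (R : Type*)

def nonbacktrackingMatrix [Zero R] [One R] : Matrix (Letter k) (Letter k) R :=
  adjMatrix (fun x y : Letter k => y ≠ linv x) R

theorem card_cyclRed_eq_trace_pow [Semiring R] (n : ℕ) :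
    (gam (Ck k) (n + 1) : R) = trace (nonbacktrackingMatrix k R ^ (n + 1)) := by
  rw [gam, Nat.card_congr ((cyclRedEquivClosedWalks n).trans
    (Equiv.subtypeProdEquivSigmaSubtype fun a l => l ∈ walks _ (n + 1) a a)),
    Nat.card_sigma, Nat.cast_sum]
  simp only [card_walks_eq_pow_apply]
  rfl

variable [CommRing R]

def onesMatrix : Matrix (Letter k) (Letter k) R := of fun _ _ => 1

def linvMatrix : Matrix (Letter k) (Letter k) R := of fun x y => if y = linv x then 1 else 0

theorem onesMatrix_mul_self : onesMatrix k R * onesMatrix k R = (2 * k : R) • onesMatrix k R := by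
  ext x z
  simp [onesMatrix, mul_apply, mul_comm]

theorem linvMatrix_mul_onesMatrix : linvMatrix k R * onesMatrix k R = onesMatrix k R := by
  ext x z
  simp [linvMatrix, onesMatrix, mul_apply]

theorem onesMatrix_mul_linvMatrix : onesMatrix k R * linvMatrix k R = onesMatrix k R := by
  ext x z
  simp [linvMatrix, onesMatrix, mul_apply, eq_linv_comm (y := z)]

theorem linvMatrix_mul_self : linvMatrix k R * linvMatrix k R = 1 := by
  ext x z
  rw [mul_apply, Finset.sum_eq_single (linv x) (fun j _ hj => by simp [linvMatrix, hj]) (by simp)]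
  simp [linvMatrix, one_apply, eq_comm]

theorem trace_onesMatrix : trace (onesMatrix k R) = 2 * k := by
  simp [onesMatrix, trace, mul_comm]

theorem trace_linvMatrix : trace (linvMatrix k R) = 0 := by
  simp [linvMatrix, trace, ne_linv_self]

theorem nonbacktrackingMatrix_eq : nonbacktrackingMatrix k R = onesMatrix k R - linvMatrix k R := by
  ext x y
  by_cases h : y = linv x <;> simp [nonbacktrackingMatrix, adjMatrix, onesMatrix, linvMatrix, h]

theorem nonbacktrackingMatrix_mul_onesMatrix :
    nonbacktrackingMatrix k R * onesMatrix k R = (2 * k - 1 : R) • onesMatrix k R := by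
  rw [nonbacktrackingMatrix_eq, sub_mul, onesMatrix_mul_self, linvMatrix_mul_onesMatrix, sub_smul,
    one_smul]

theorem nonbacktrackingMatrix_mul_self :
    nonbacktrackingMatrix k R * nonbacktrackingMatrix k R =
      (2 * k - 2 : R) • onesMatrix k R + 1 := by
  rw [nonbacktrackingMatrix_eq, sub_mul, mul_sub, mul_sub, onesMatrix_mul_self,
    onesMatrix_mul_linvMatrix, linvMatrix_mul_onesMatrix, linvMatrix_mul_self]
  module

theorem nonbacktrackingMatrix_pow_mul_onesMatrix (n : ℕ) :
    nonbacktrackingMatrix k R ^ n * onesMatrix k R = (2 * k - 1 : R) ^ n • onesMatrix k R := by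
  induction n with
  | zero => simp
  | succ n ih =>
    rw [pow_succ, mul_assoc, nonbacktrackingMatrix_mul_onesMatrix, mul_smul_comm, ih, smul_smul,
      pow_succ']

theorem trace_nonbacktrackingMatrix_pow_add_two (n : ℕ) :
    trace (nonbacktrackingMatrix k R ^ (n + 2)) =
      trace (nonbacktrackingMatrix k R ^ n) + 2 * k * (2 * k - 2) * (2 * k - 1) ^ n := by
  rw [pow_add, sq, nonbacktrackingMatrix_mul_self, mul_add, mul_one, mul_smul_comm,
    nonbacktrackingMatrix_pow_mul_onesMatrix, trace_add, trace_smul, trace_smul, trace_onesMatrix,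
    smul_eq_mul, smul_eq_mul]
  ring

theorem trace_nonbacktrackingMatrix_pow (n : ℕ) :
    trace (nonbacktrackingMatrix k R ^ n) = (2 * k - 1) ^ n + 1 + (k - 1) * (1 + (-1) ^ n) := by
  induction n using Nat.twoStepInduction with
  | zero =>
    rw [pow_zero, trace_one, Fintype.card_prod, Fintype.card_fin, Fintype.card_bool]
    push_cast
    ring
  | one =>
    rw [pow_one, nonbacktrackingMatrix_eq, trace_sub, trace_onesMatrix, trace_linvMatrix]
    ring
  | more n ih _ =>
    rw [trace_nonbacktrackingMatrix_pow_add_two, ih]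
    ring

end Letters

theorem stmt0_general (k : ℕ) (n : ℕ) (hn : 1 ≤ n) :
    (gam (Ck k) n : ℤ) = (2 * (k : ℤ) - 1) ^ n + 1 + ((k : ℤ) - 1) * (1 + (-1) ^ n) := by
  obtain ⟨m, rfl⟩ := Nat.exists_eq_add_of_le' hn
  rw [card_cyclRed_eq_trace_pow, trace_nonbacktrackingMatrix_pow]

/-- Rivin's formula: the number of cyclically reduced words of length n ≥ 1 in
F(a_1,...,a_k) equals (2k-1)^n + 1 + (k-1)(1+(-1)^n). -/
theorem stmt0 (k : ℕ) (hk : 2 ≤ k) (n : ℕ) (hn : 1 ≤ n) :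
    (gam (Ck k) n : ℤ) = (2 * (k : ℤ) - 1) ^ n + 1 + ((k : ℤ) - 1) * (1 + (-1) ^ n) :=
  stmt0_general k n hn
end

section
/- The number of cyclically reduced words of length n > 1 over the alphabet {a, b, b^{-1}} (in the modular group setting) is 0 if n is odd and 2·2^{n/2} if n is even. -/
open Filter

/-- The alphabet A = {a, b, b⁻¹} for the modular group M = ⟨a,b | a² = b³ = 1⟩. -/
inductive ML : Type
  | a : ML
  | b : ML
  | binv : ML
  deriving DecidableEq

/-- A word over A is reduced iff it avoids aa, bb, b⁻¹b⁻¹, bb⁻¹, b⁻¹b, i.e. the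
letter a alternates with letters from {b, b⁻¹}. -/
def MRed (w : List ML) : Prop :=
  w.Chain' (fun x y => (x = ML.a) ↔ ¬(y = ML.a))

/-- A word is cyclically reduced iff all its cyclic permutations are reduced. -/
def MCyclRed (w : List ML) : Prop := ∀ r : ℕ, MRed (w.rotate r)

/-- Number of words of length n in a set Q of words over A. -/
noncomputable def mgam (Q : Set (List ML)) (n : ℕ) : ℕ :=
  Nat.card {w : List ML // w ∈ Q ∧ w.length = n}

/-!
Cyclic reducedness of a word of length `n ≥ 2` says exactly that, going around the word as a
cycle, each letter is `a` if and only if the next one is not. So the positions of `a` alternate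
around a cycle of length `n`, which forces `n` to be even. The word is then determined by the
parity class of the positions of `a` (two choices) and by a choice between `b` and `b⁻¹` at each
of the remaining `n / 2` positions.
-/

theorem Nat.card_subtype_length_eq {α : Type*} (P : List α → Prop) (n : ℕ) :
    Nat.card {w : List α // P w ∧ w.length = n} =
      Nat.card {v : Fin n → α // P (List.ofFn v)} := by
  symm
  refine Nat.card_eq_of_bijective (fun v => ⟨List.ofFn v.1, v.2, List.length_ofFn⟩) ⟨?_, ?_⟩
  · intro v v' h
    exact Subtype.ext (List.ofFn_injective (congrArg Subtype.val h))
  · rintro ⟨w, hw, rfl⟩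
    exact ⟨⟨fun i => w[i], by simpa using hw⟩, Subtype.ext List.ofFn_getElem⟩

theorem finRotate_eq_mk_mod {n : ℕ} (i : Fin n) :
    finRotate n i = ⟨(i + 1) % n, Nat.mod_lt _ i.pos⟩ := by
  have := i.neZero
  ext
  simp [Fin.val_add]

theorem forall_isChain_rotate_ofFn_iff {α : Type*} {R : α → α → Prop} {n : ℕ} (hn : 2 ≤ n)
    (v : Fin n → α) :
    (∀ r, ((List.ofFn v).rotate r).IsChain R) ↔ ∀ i, R (v i) (v (finRotate n i)) := by
  simp only [List.isChain_iff_getElem, List.getElem_rotate, List.length_rotate, List.length_ofFn,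
    List.getElem_ofFn, finRotate_eq_mk_mod]
  constructor
  · intro h i
    simpa [Nat.mod_eq_of_lt i.2, Nat.add_comm] using h i 0 (by omega)
  · intro h r j hj
    simpa [Nat.add_right_comm] using h ⟨(j + r) % n, Nat.mod_lt _ (by omega)⟩

theorem forall_iff_not_finRotate_iff {n : ℕ} (hn : n ≠ 0) {p : Fin n → Prop} :
    (∀ i, p i ↔ ¬ p (finRotate n i)) ↔
      Even n ∧ ∃ c : Bool, ∀ i : Fin n, p i ↔ (Even (i : ℕ) ↔ c) := by
  classical
  have hn1 : 1 ≤ n := Nat.one_le_iff_ne_zero.mpr hn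
  simp only [finRotate_eq_mk_mod]
  constructor
  · intro h
    have hpar : ∀ i (hi : i < n), p ⟨i, hi⟩ ↔ (Even i ↔ p ⟨0, hn1⟩) := by
      intro i
      induction i with
      | zero => simp
      | succ i ih =>
        intro hi
        have := h ⟨i, by omega⟩
        simp only [Nat.mod_eq_of_lt hi] at this
        rw [ih] at this
        rw [Nat.even_add_one]
        tauto
    have hlast := h ⟨n - 1, by omega⟩
    simp only [Nat.sub_add_cancel hn1, Nat.mod_self, hpar (n - 1)] at hlast
    have hodd : ¬ Even (n - 1) := by tauto
    refine ⟨by simpa [Nat.sub_add_cancel hn1] using Nat.even_add_one.mpr hodd,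
      decide (p ⟨0, hn1⟩), fun i => by simpa using hpar i i.2⟩
  · rintro ⟨hn2, c, hc⟩ i
    have hsucc : Even ((i + 1) % n) ↔ ¬ Even (i : ℕ) := by
      rcases (show (i : ℕ) + 1 ≤ n from i.2).lt_or_eq with hlt | hlast
      · rw [Nat.mod_eq_of_lt hlt, Nat.even_add_one]
      · rw [hlast, Nat.mod_self]
        rw [← hlast] at hn2
        simpa [Nat.even_add_one] using hn2
    rw [hc, hc, hsucc]
    tauto

theorem mCyclRed_ofFn_iff {n : ℕ} (hn : 2 ≤ n) (v : Fin n → ML) :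
    MCyclRed (List.ofFn v) ↔ Even n ∧ ∃ c : Bool, ∀ i, v i = ML.a ↔ (Even (i : ℕ) ↔ c) :=
  (forall_isChain_rotate_ofFn_iff hn v).trans (forall_iff_not_finRotate_iff (by omega))

def slotLetters (q : Prop) [Decidable q] : Finset ML := if q then {ML.a} else {ML.b, ML.binv}

theorem mem_slotLetters {q : Prop} [Decidable q] {x : ML} :
    x ∈ slotLetters q ↔ (x = ML.a ↔ q) := by
  unfold slotLetters
  split_ifs <;> cases x <;> simp_all

theorem card_slotLetters (q : Prop) [Decidable q] :
    (slotLetters q).card = if q then 1 else 2 := by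
  unfold slotLetters
  split_ifs <;> rfl

theorem Fin.prod_univ_two_mul_ite_even_iff {M : Type*} [CommMonoid M] (m : ℕ) (c : Bool)
    (x y : M) : ∏ i : Fin (2 * m), (if (Even (i : ℕ) ↔ c) then x else y) = (x * y) ^ m := by
  rw [Fin.prod_univ_eq_prod_range (fun i => if (Even i ↔ c) then x else y)]
  induction m with
  | zero => simp
  | succ m ih =>
    rw [show 2 * (m + 1) = 2 * m + 1 + 1 by ring, Finset.prod_range_succ, Finset.prod_range_succ,
      ih, pow_succ]
    cases c <;> simp only [even_two, Even.mul_right, Nat.not_even_bit1, Bool.false_eq_true, iff_true,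
      iff_false, not_true_eq_false, ↓reduceIte] <;> ac_rfl

theorem card_alternating_tuples (m : ℕ) (hm : m ≠ 0) :
    Nat.card {v : Fin (2 * m) → ML //
      ∃ c : Bool, ∀ i : Fin (2 * m), v i = ML.a ↔ (Even (i : ℕ) ↔ c)} = 2 * 2 ^ m := by
  set S : Bool → Finset (Fin (2 * m) → ML) :=
    fun c => Fintype.piFinset fun i => slotLetters (Even (i : ℕ) ↔ c)
  have hmem : ∀ v, (∃ c : Bool, ∀ i : Fin (2 * m), v i = ML.a ↔ (Even (i : ℕ) ↔ c)) ↔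
      v ∈ Finset.univ.biUnion S := by
    simp [S, Fintype.mem_piFinset, mem_slotLetters, or_comm]
  have hdisj : ((Finset.univ : Finset Bool) : Set Bool).PairwiseDisjoint S := by
    intro c _ c' _ hne
    refine Finset.disjoint_left.mpr fun v hv hv' => hne ?_
    have h0 := (mem_slotLetters.mp (Fintype.mem_piFinset.mp hv ⟨0, by omega⟩)).symm.trans
      (mem_slotLetters.mp (Fintype.mem_piFinset.mp hv' ⟨0, by omega⟩))
    simpa using h0
  have hcard : ∀ c, (S c).card = 2 ^ m := fun c => by
    simp only [S, Fintype.card_piFinset, card_slotLetters]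
    rw [Fin.prod_univ_two_mul_ite_even_iff, one_mul]
  rw [Nat.card_congr (Equiv.subtypeEquivRight hmem), Nat.card_eq_finsetCard,
    Finset.card_biUnion hdisj, Finset.sum_congr rfl fun c _ => hcard c]
  simp

/-- The number of cyclically reduced words of length n > 1 over {a, b, b⁻¹} is 0 for
odd n and 2·2^(n/2) for even n. -/
theorem stmt2 (n : ℕ) (hn : 1 < n) :
    mgam {w | MCyclRed w} n = if Even n then 2 * 2 ^ (n / 2) else 0 := by
  rw [mgam, Nat.card_subtype_length_eq]
  simp only [Set.mem_ofPred_eq]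
  rw [Nat.card_congr (Equiv.subtypeEquivRight (mCyclRed_ofFn_iff hn))]
  split_ifs with heven
  · obtain ⟨m, rfl⟩ := heven
    rw [← two_mul, Nat.mul_div_cancel_left _ two_pos]
    simpa using card_alternating_tuples m (by omega)
  · simp [heven]
end

section
/- Let P_k ⊆ C_k be the set of non-primitive cyclically reduced words in F(a_1,...,a_k). Then γ(n, C_k \ P_k) ≥ (2k-2)(2k-3)^{n-2} for all n ≥ 2, and consequently the lower genericity entropy t'(P_k) ≥ log(2k-3)/log(2k-1). -/
open Filter

/-- Primitive element of a free group: image of a generator under an automorphism. -/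
def Primitive {k : ℕ} (g : FreeGroup (Fin k)) : Prop :=
  ∃ (φ : FreeGroup (Fin k) ≃* FreeGroup (Fin k)) (i : Fin k), φ (FreeGroup.of i) = g

/-! Let `z` be the first generator. For every freely reduced word `v` in the other generators,
`z v` is cyclically reduced, because the only adjacency added by rotating is across the unique
occurrence of `z`, and it is primitive, because the Nielsen transformation `z ↦ z v` fixes `v`, so
it is an automorphism (with inverse `z ↦ z v⁻¹`) sending `z` to `z v`. Words `v` of length `n - 1`
are counted by choosing the first letter among `2k - 2` and each later one among the `2k - 3`
letters that do not cancel the previous one. The entropy bound follows by taking logarithms;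
the trivial bound `(2k)ⁿ` is needed as well, since in `ℝ` the `liminf` of a sequence that is not
bounded above is a junk value.
-/

namespace List

variable {α β : Type*}

theorem isChain_rotate_cons {R : α → α → Prop} {a : α} {l : List α} (hl : l.IsChain R)
    (ha : ∀ x ∈ l, R a x ∧ R x a) (r : ℕ) : ((a :: l).rotate r).IsChain R := by
  rw [rotate_eq_drop_append_take_mod]
  rcases (r % (a :: l).length) with _ | t
  · simpa [isChain_cons] using ⟨fun y hy => (ha y (mem_of_mem_head? hy)).1, hl⟩
  · refine (hl.drop t).append ?_ fun x hx y hy => ?_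
    · exact isChain_cons.2 ⟨fun y hy => (ha y (mem_of_mem_take (mem_of_mem_head? hy))).1,
        hl.take t⟩
    · obtain rfl : a = y := by simpa using hy
      exact (ha x (mem_of_mem_drop (mem_of_mem_getLast? hx))).2

def chainOf (e : α → β → α) : α → List β → List α
  | x, [] => [x]
  | x, b :: bs => x :: chainOf e (e x b) bs

theorem length_chainOf (e : α → β → α) (x : α) (bs : List β) :
    (chainOf e x bs).length = bs.length + 1 := by
  induction bs generalizing x <;> simp [chainOf, *]

theorem head?_chainOf (e : α → β → α) (x : α) (bs : List β) :
    (chainOf e x bs).head? = some x := by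
  cases bs <;> rfl

theorem isChain_chainOf {R : α → α → Prop} {e : α → β → α} (he : ∀ x b, R x (e x b))
    (x : α) (bs : List β) : (chainOf e x bs).IsChain R := by
  induction bs generalizing x with
  | nil => exact isChain_singleton x
  | cons b bs ih => exact isChain_cons.2 ⟨by simp [head?_chainOf, he], ih (e x b)⟩

theorem chainOf_injective {e : α → β → α} (he : ∀ x, Function.Injective (e x)) :
    Function.Injective fun p : α × List β => chainOf e p.1 p.2 := by
  rintro ⟨x, bs⟩ ⟨x', bs'⟩ h
  induction bs generalizing x x' bs' with
  | nil =>
    obtain rfl : bs' = [] := by simpa [length_chainOf, eq_comm] using congrArg length h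
    simpa [chainOf] using h
  | cons b bs ih =>
    obtain ⟨b', bs', rfl⟩ : ∃ b' bs'', bs' = b' :: bs'' := by
      cases bs' <;> simp_all [chainOf, ← length_eq_zero_iff, length_chainOf]
    simp only [chainOf, cons.injEq] at h
    obtain ⟨rfl, h⟩ := h
    obtain ⟨hb, rfl⟩ := Prod.ext_iff.1 (ih _ _ _ h)
    simp [he x hb]

theorem finite_subtype_length_eq (p : List α → Prop) (n : ℕ) [Finite α] :
    Finite {l : List α // p l ∧ l.length = n} :=
  ((finite_length_eq α n).subset fun _ hl => hl.2).to_subtype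

theorem card_mul_pow_le_card_isChain [Fintype α] [Fintype β] {R : α → α → Prop}
    {e : α → β → α} (he : ∀ x b, R x (e x b)) (he' : ∀ x, Function.Injective (e x)) (n : ℕ) :
    Fintype.card α * Fintype.card β ^ n ≤
      Nat.card {l : List α // l.IsChain R ∧ l.length = n + 1} := by
  have := finite_subtype_length_eq (IsChain R) (α := α) (n + 1)
  calc Fintype.card α * Fintype.card β ^ n = Nat.card (α × Vector β n) := by simp
    _ ≤ _ := by
      refine Nat.card_le_card_of_injective
        (fun p => ⟨chainOf e p.1 p.2.1, isChain_chainOf he _ _, by simp [length_chainOf]⟩)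
        fun p q h => ?_
      obtain ⟨h1, h2⟩ := Prod.ext_iff.1 (chainOf_injective he'
        (a₁ := (p.1, p.2.1)) (a₂ := (q.1, q.2.1)) (congrArg Subtype.val h))
      exact Prod.ext h1 (Subtype.ext h2)

theorem card_mul_pred_pow_le_card_isChain_ne [Fintype α] [DecidableEq α] (f : α → α) (n : ℕ) :
    Fintype.card α * (Fintype.card α - 1) ^ n ≤
      Nat.card {l : List α // l.IsChain (fun x y => y ≠ f x) ∧ l.length = n + 1} := by
  have h : ∀ x, Fintype.card {y // y ≠ f x} = Fintype.card (Fin (Fintype.card α - 1)) := by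
    simp
  simpa using card_mul_pow_le_card_isChain
    (fun x b => ((Fintype.equivFinOfCardEq (h x)).symm b).2)
    (fun x => Subtype.val_injective.comp (Fintype.equivFinOfCardEq (h x)).symm.injective) n

end List

namespace FreeGroup

variable {α : Type*} [DecidableEq α]

def transvection (z : α) (g : FreeGroup α) : FreeGroup α →* FreeGroup α :=
  lift fun i => if i = z then of z * g else of i

theorem transvection_of_self (z : α) (g : FreeGroup α) : transvection z g (of z) = of z * g := by
  simp [transvection]

theorem transvection_of_of_ne {z i : α} (g : FreeGroup α) (h : i ≠ z) :
    transvection z g (of i) = of i := by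
  simp [transvection, h]

theorem transvection_mk_of_forall_ne {z : α} (g : FreeGroup α) {v : List (α × Bool)}
    (hv : ∀ x ∈ v, x.1 ≠ z) : transvection z g (mk v) = mk v := by
  conv_rhs => rw [← lift_of_apply (mk v)]
  rw [transvection, lift_mk, lift_mk]
  refine congrArg List.prod (List.map_congr_left fun x hx => ?_)
  simp [hv x hx]

theorem transvection_one (z : α) : transvection z 1 = MonoidHom.id (FreeGroup α) :=
  ext_hom _ _ fun i => by
    by_cases h : i = z
    · subst h; simp [transvection_of_self]
    · simp [transvection_of_of_ne _ h]

theorem transvection_comp_transvection {z : α} {g h : FreeGroup α}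
    (hg : transvection z h g = g) :
    (transvection z h).comp (transvection z g) = transvection z (h * g) :=
  ext_hom _ _ fun i => by
    by_cases hi : i = z
    · subst hi; simp [transvection_of_self, hg, mul_assoc]
    · simp [transvection_of_of_ne _ hi]

def transvectionEquiv (z : α) (g : FreeGroup α) (hg : ∀ h, transvection z h g = g) :
    FreeGroup α ≃* FreeGroup α :=
  MonoidHom.toMulEquiv (transvection z g) (transvection z g⁻¹)
    (by rw [transvection_comp_transvection (hg _), inv_mul_cancel, transvection_one])
    (by rw [transvection_comp_transvection (by rw [_root_.map_inv, hg]), mul_inv_cancel,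
      transvection_one])

end FreeGroup

theorem cyclRed_cons_of_forall_fst_ne {k : ℕ} {a : Letter k} {l : List (Letter k)}
    (hl : Reduced l) (ha : ∀ x ∈ l, x.1 ≠ a.1) : CyclRed (a :: l) :=
  List.isChain_rotate_cons hl fun x hx =>
    ⟨fun h => ha x hx (congrArg Prod.fst h :), fun h => ha x hx (congrArg Prod.fst h :).symm⟩

theorem primitive_mk_cons_of_forall_fst_ne {k : ℕ} (z : Fin k) {v : List (Letter k)}
    (hv : ∀ x ∈ v, x.1 ≠ z) :
    Primitive (FreeGroup.mk ((z, true) :: v)) :=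
  ⟨FreeGroup.transvectionEquiv z _ fun _ => FreeGroup.transvection_mk_of_forall_ne _ hv, z,
    (FreeGroup.transvection_of_self z _).trans FreeGroup.mul_mk⟩

theorem mul_pow_le_gam_primitive {k n : ℕ} (hk : 2 ≤ k) (hn : 2 ≤ n) :
    (2 * k - 2) * (2 * k - 3) ^ (n - 2) ≤
      gam (Ck k \ {w | w ∈ Ck k ∧ ¬ Primitive (FreeGroup.mk w)}) n := by
  obtain ⟨m, rfl⟩ := Nat.exists_eq_add_of_le' hn
  let z : Fin k := ⟨0, by omega⟩
  let A := {x : Letter k // x.1 ≠ z}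
  have hA : Fintype.card A = 2 * k - 2 := by
    rw [Fintype.card_congr (Equiv.prodSubtypeFstEquivSubtypeProd (p := (· ≠ z)))]
    simp
    omega
  have avoid (l : List A) : ∀ x ∈ l.map Subtype.val, x.1 ≠ z :=
    fun x hx => by obtain ⟨y, -, rfl⟩ := List.mem_map.1 hx; exact y.2
  have := List.finite_subtype_length_eq
    (· ∈ Ck k \ {w | w ∈ Ck k ∧ ¬ Primitive (FreeGroup.mk w)}) (m + 2)
  calc (2 * k - 2) * (2 * k - 3) ^ (m + 2 - 2) = Fintype.card A * (Fintype.card A - 1) ^ m := by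
        rw [hA, show 2 * k - 2 - 1 = 2 * k - 3 by omega, Nat.add_sub_cancel]
    _ ≤ _ := List.card_mul_pred_pow_le_card_isChain_ne (fun x : A => ⟨linv x.1, x.2⟩) m
    _ ≤ _ := by
      refine Nat.card_le_card_of_injective
        (fun l => ⟨(z, true) :: l.1.map Subtype.val, ⟨?_, fun h => h.2 ?_⟩, by simp [l.2.2]⟩)
        fun l l' h => ?_
      · refine cyclRed_cons_of_forall_fst_ne ?_ (avoid l.1)
        exact (List.isChain_map _).2 (l.2.1.imp fun x y hxy h => hxy (Subtype.ext h))
      · exact primitive_mk_cons_of_forall_fst_ne z (avoid l.1)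
      · exact Subtype.ext (List.map_injective_iff.2 Subtype.val_injective (by simpa using h))

theorem gam_le_pow {k : ℕ} (Q : Set (List (Letter k))) (n : ℕ) : gam Q n ≤ (2 * k) ^ n :=
  calc gam Q n ≤ Nat.card (List.Vector (Letter k) n) :=
        Nat.card_le_card_of_injective (fun w => ⟨w.1, w.2.2⟩)
          fun _ _ h => Subtype.ext (congrArg Subtype.val h :)
    _ = (2 * k) ^ n := by simp [mul_comm]

open Real in
theorem le_liminf_log_div_mul {u : ℕ → ℝ} {b c B L : ℝ} (hb : 0 < b) (hc : 0 < c) (hL : 0 < L)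
    (hlow : ∀ᶠ n in atTop, c * b ^ n ≤ u n) (hup : ∀ᶠ n in atTop, u n ≤ B ^ n) :
    log b / L ≤ liminf (fun n : ℕ => log (u n) / (n * L)) atTop := by
  have hlim : Tendsto (fun n : ℕ => log c / L / n + log b / L) atTop (nhds (log b / L)) := by
    simpa using (tendsto_const_div_atTop_nhds_zero_nat (log c / L)).add_const (log b / L)
  refine hlim.liminf_eq.symm.le.trans (liminf_le_liminf ?_ hlim.isBoundedUnder_ge
    (isCoboundedUnder_ge_of_eventually_le atTop (x := log B / L) ?_))
  · filter_upwards [hlow, eventually_gt_atTop 0] with n hn hn0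
    have hlog : log c + n * log b ≤ log (u n) := by
      rw [← log_pow, ← log_mul hc.ne' (by positivity)]
      exact log_le_log (by positivity) hn
    have hn0' : (0 : ℝ) < n := by exact_mod_cast hn0
    calc log c / L / n + log b / L = (log c + n * log b) / (n * L) := by field_simp
      _ ≤ log (u n) / (n * L) := by gcongr
  · filter_upwards [hlow, hup, eventually_gt_atTop 0] with n hn hn' hn0
    have hlog : log (u n) ≤ n * log B := by
      rw [← log_pow]
      exact log_le_log ((by positivity : 0 < c * b ^ n).trans_le hn) hn'
    have hn0' : (0 : ℝ) < n := by exact_mod_cast hn0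
    calc log (u n) / (n * L) ≤ n * log B / (n * L) := by gcongr
      _ = log B / L := by field_simp

/-- If P_k ⊆ C_k is the set of non-primitive cyclically reduced words, then
γ(n, C_k \ P_k) ≥ (2k-2)(2k-3)^{n-2} for n ≥ 2, and consequently
t'(P_k) ≥ log(2k-3)/log(2k-1). -/
theorem stmt10 (k : ℕ) (hk : 2 ≤ k) :
    (∀ n : ℕ, 2 ≤ n →
      (2 * k - 2) * (2 * k - 3) ^ (n - 2) ≤
        gam (Ck k \ {w | w ∈ Ck k ∧ ¬ Primitive (FreeGroup.mk w)}) n) ∧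
    Real.log (2 * (k : ℝ) - 3) / Real.log (2 * (k : ℝ) - 1) ≤
      liminf (fun n : ℕ =>
        Real.log (gam (Ck k \ {w | w ∈ Ck k ∧ ¬ Primitive (FreeGroup.mk w)}) n) /
          (n * Real.log (2 * (k : ℝ) - 1))) atTop := by
  have hlower (n : ℕ) (hn : 2 ≤ n) := mul_pow_le_gam_primitive hk hn
  have hk' : (2 : ℝ) ≤ k := by exact_mod_cast hk
  have hb : (0 : ℝ) < 2 * k - 3 := by linarith
  refine ⟨hlower, le_liminf_log_div_mul (c := ((2 * k - 3 : ℝ) ^ 2)⁻¹) (B := 2 * k) hb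
    (by positivity) (Real.log_pos (by linarith)) ?_ (.of_forall fun n => ?_)⟩
  · filter_upwards [eventually_ge_atTop 2] with n hn
    calc ((2 * k - 3 : ℝ) ^ 2)⁻¹ * (2 * k - 3) ^ n = ((2 * k - 3 : ℕ) ^ (n - 2) : ℕ) := by
          push_cast [Nat.cast_sub (by omega : 3 ≤ 2 * k)]
          rw [pow_sub₀ _ hb.ne' hn, mul_comm]
      _ ≤ ((2 * k - 2) * (2 * k - 3) ^ (n - 2) : ℕ) := by
          exact_mod_cast Nat.le_mul_of_pos_left _ (by omega)
      _ ≤ _ := by exact_mod_cast hlower n hn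
  · exact_mod_cast gam_le_pow _ n
end

section
/- Fix integers 2 ≤ L < k and 0 < μ < 1. The number of (μ,L)-readable cyclically reduced words of length n in F(a_1,...,a_k) is at most C (μn)^{3L+1} (6L)^n (2k-1)^{μn} for a constant C > 0 independent of n. -/
open Filter

/-- A finite connected folded graph with edges labelled by letters of `F(a_1,...,a_k)`,
in Serre's formalism (edges come with a fixed-point-free involution `bar`). -/
structure LGraph (k : ℕ) where
  V : Type
  E : Type
  [fintypeV : Fintype V]
  [fintypeE : Fintype E]
  ini : E → V
  bar : E → E
  bar_invol : ∀ e, bar (bar e) = e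
  bar_ne : ∀ e, bar e ≠ e
  lab : E → Letter k
  lab_bar : ∀ e, lab (bar e) = linv (lab e)
  folded : ∀ e f, ini e = ini f → lab e = lab f → e = f
  connected : ∀ u v : V, Relation.ReflTransGen (fun x y => ∃ e, ini e = x ∧ ini (bar e) = y) u v

/-- Degree of a vertex: number of oriented edges starting at it. -/
noncomputable def LGraph.deg {k : ℕ} (Γ : LGraph k) (v : Γ.V) : ℕ :=
  Nat.card {e : Γ.E // Γ.ini e = v}

/-- Volume: the number of non-oriented edges. -/
noncomputable def LGraph.vol {k : ℕ} (Γ : LGraph k) : ℕ := Nat.card Γ.E / 2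

/-- Rank of the (free) fundamental group of a finite connected graph:
(#non-oriented edges) - (#vertices) + 1. -/
noncomputable def LGraph.rank {k : ℕ} (Γ : LGraph k) : ℕ :=
  Γ.vol + 1 - Nat.card Γ.V

/-- `Γ.Reads w` : there is an immersed path in `Γ` labelled `w`. -/
def LGraph.Reads {k : ℕ} (Γ : LGraph k) (w : List (Letter k)) : Prop :=
  ∃ p : ℕ → Γ.E,
    (∀ i, i + 1 < w.length →
      Γ.ini (p (i + 1)) = Γ.ini (Γ.bar (p i)) ∧ p (i + 1) ≠ Γ.bar (p i)) ∧
    (∀ i (h : i < w.length), Γ.lab (p i) = w.get ⟨i, h⟩)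

/-- A freely reduced word v is (μ,L)-readable if it can be read along an immersed path
in a finite connected folded labelled graph with free fundamental group of rank ≤ L,
at least one vertex of degree < 2k, at most two degree-one vertices, and volume ≤ μ|v|. -/
def MuLReadable {k : ℕ} (μ : ℝ) (L : ℕ) (w : List (Letter k)) : Prop :=
  ∃ Γ : LGraph k,
    Γ.rank ≤ L ∧
    (∃ v : Γ.V, Γ.deg v < 2 * k) ∧
    Nat.card {v : Γ.V // Γ.deg v = 1} ≤ 2 ∧
    Γ.Reads w ∧
    (Γ.vol : ℝ) ≤ μ * w.length

/-!
Record how a word `w` of length `n` is read along an immersed path in an admissible graph `Γ`,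
one symbol per step: `0` for an edge crossed for the first time that leads to a new vertex, `1` for
one that leads to a vertex already seen (a merge), and `2 + j` for an edge crossed before, `j` being
its index among the germs already known at the current vertex. As `Γ` has rank `≤ L` and at most
two leaves, its degrees are at most `2L + 3`, so every symbol is `< 6L`. Together with the first
letter, the letters read along new edges (at most `vol Γ ≤ μn` of them, each one of `2k - 1`
letters since a folded graph admits no backtracking) and the first-visit times of the targets of
merges (at most `rank Γ ≤ L` of them, each `< n`), the symbols determine `w`: two paths with the
same record visit vertices and edges in the same pattern. This leaves at most
`(6L)ⁿ · 2k · (2k - 1)^{μn} · n^L` words, and `n^L ≤ (μn)^{3L+1} / μ^L` as soon as one word exists,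
since then `μn ≥ vol Γ ≥ 1`.
-/

open Finset

open scoped Classical

attribute [instance] LGraph.fintypeV LGraph.fintypeE

variable {k : ℕ}

lemma card_subtype_ne_letter (x : Letter k) :
    Fintype.card {y : Letter k // y ≠ x} = 2 * k - 1 := by
  simp [mul_comm]

noncomputable def otherIdx (x y : Letter k) : ℕ :=
  if h : y = x then 0 else Fintype.equivFinOfCardEq (card_subtype_ne_letter x) ⟨y, h⟩

lemma otherIdx_lt (hk : 0 < k) (x y : Letter k) : otherIdx x y < 2 * k - 1 := by
  unfold otherIdx
  split
  · omega
  · exact Fin.isLt _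

lemma eq_of_otherIdx_eq {x y y' : Letter k} (hy : y ≠ x) (hy' : y' ≠ x)
    (h : otherIdx x y = otherIdx x y') : y = y' := by
  simp only [otherIdx, dif_neg hy, dif_neg hy'] at h
  exact congrArg Subtype.val ((Fintype.equivFinOfCardEq _).injective (Fin.ext h))

/-- The values of `f` on `S`, listed in increasing order of the argument and padded with `0`. -/
noncomputable def pack {m : ℕ} (S : Finset ℕ) (f : ℕ → ℕ) (d : Fin m) : ℕ :=
  if h : d.1 < #S then f (S.orderEmbOfFin rfl ⟨d, h⟩) else 0

lemma pack_lt {m N : ℕ} {S : Finset ℕ} {f : ℕ → ℕ} (hN : 0 < N) (hf : ∀ t ∈ S, f t < N)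
    (d : Fin m) : pack S f d < N := by
  unfold pack
  split
  · exact hf _ (S.orderEmbOfFin_mem rfl _)
  · exact hN

lemma eqOn_of_pack_eq {m : ℕ} {S : Finset ℕ} {f g : ℕ → ℕ} (hS : #S ≤ m)
    (h : pack (m := m) S f = pack S g) : Set.EqOn f g S := by
  intro t ht
  obtain ⟨d, rfl⟩ : t ∈ Set.range (S.orderEmbOfFin rfl) := by
    rw [range_orderEmbOfFin]; exact ht
  have hd := congrFun h ⟨d, d.2.trans_le hS⟩
  simpa [pack, d.2] using hd

namespace LGraph

variable (Γ : LGraph k)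

lemma bar_injective : Function.Injective Γ.bar :=
  Function.LeftInverse.injective Γ.bar_invol

lemma card_eq_sum_deg : Fintype.card Γ.E = ∑ v, Γ.deg v := by
  simp only [LGraph.deg, Nat.card_eq_fintype_card, Fintype.card_subtype]
  exact card_eq_sum_card_fiberwise fun _ _ => mem_univ _

lemma deg_pos_of_ne {u v : Γ.V} (huv : u ≠ v) : 0 < Γ.deg u := by
  rcases (Γ.connected u v).cases_head with rfl | ⟨_, ⟨e, he, _⟩, _⟩
  · exact absurd rfl huv
  · have : Nonempty {e : Γ.E // Γ.ini e = u} := ⟨⟨e, he⟩⟩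
    exact Nat.card_pos

/-- The degrees of the vertices other than `v` sum to at least `2 (#V - 1) - 2`: none of them is
isolated and at most two are leaves. -/
lemma deg_le_two_mul_rank_add_three (hleaf : Nat.card {v // Γ.deg v = 1} ≤ 2) (v : Γ.V) :
    Γ.deg v ≤ 2 * Γ.rank + 3 := by
  have hsum := Γ.card_eq_sum_deg
  rw [← add_sum_erase _ _ (mem_univ v)] at hsum
  have hleaf' : #{u ∈ univ.erase v | Γ.deg u = 1} ≤ 2 := by
    rw [Nat.card_eq_fintype_card, Fintype.card_subtype] at hleaf
    exact (card_le_card (filter_subset_filter _ (erase_subset v univ))).trans hleaf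
  have hlow : ∑ _u ∈ univ.erase v, 2 ≤
      ∑ u ∈ univ.erase v, (Γ.deg u + if Γ.deg u = 1 then 1 else 0) :=
    sum_le_sum fun u hu => by
      have := Γ.deg_pos_of_ne (ne_of_mem_erase hu)
      split <;> omega
  rw [sum_add_distrib, sum_boole, sum_const, card_erase_of_mem (mem_univ v), card_univ,
    smul_eq_mul] at hlow
  simp only [Nat.cast_id] at hlow
  simp only [LGraph.rank, LGraph.vol, Nat.card_eq_fintype_card]
  omega

lemma exists_ini_not_mem_ini_bar_mem {S : Finset Γ.V} {x y : Γ.V} (hx : x ∉ S) (hy : y ∈ S) :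
    ∃ e, Γ.ini e ∉ S ∧ Γ.ini (Γ.bar e) ∈ S := by
  induction Γ.connected x y using Relation.ReflTransGen.head_induction_on with
  | refl => exact absurd hy hx
  | head hstep _ ih =>
    rename_i c _
    by_cases hc : c ∈ S
    · obtain ⟨e, he, he'⟩ := hstep
      exact ⟨e, he ▸ hx, he' ▸ hc⟩
    · exact ih hc

/-- By induction on `#Sᶜ`: connectedness provides an edge pair between `Sᶜ` and `S`, which is not
in `F`. -/
lemma card_add_two_mul_card_compl_le {S : Finset Γ.V} {F : Finset Γ.E} (hS : S.Nonempty)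
    (hini : ∀ e ∈ F, Γ.ini e ∈ S) (hbar : ∀ e ∈ F, Γ.bar e ∈ F) :
    #F + 2 * #Sᶜ ≤ Fintype.card Γ.E := by
  obtain ⟨j, hj⟩ : ∃ j, #Sᶜ = j := ⟨_, rfl⟩
  induction j generalizing S F with
  | zero => simpa [hj] using card_le_univ F
  | succ j ih =>
    obtain ⟨u, hu⟩ : Sᶜ.Nonempty := card_pos.mp (by omega)
    obtain ⟨e, he, hbe⟩ := Γ.exists_ini_not_mem_ini_bar_mem (mem_compl.mp hu) hS.choose_spec
    have heF : e ∉ F := fun h => he (hini e h)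
    have hbeF : Γ.bar e ∉ F := fun h => heF (Γ.bar_invol e ▸ hbar _ h)
    have hcard : #(insert e (insert (Γ.bar e) F)) = #F + 2 := by
      rw [card_insert_of_notMem (by simp [heF, (Γ.bar_ne e).symm]),
        card_insert_of_notMem hbeF]
    have hcompl : #(insert (Γ.ini e) S)ᶜ = j := by
      rw [compl_insert, card_erase_of_mem (mem_compl.mpr he)]
      omega
    have := ih (S := insert (Γ.ini e) S) (F := insert e (insert (Γ.bar e) F))
      (hS.mono (subset_insert _ _)) ?_ ?_ hcompl
    · omega
    · simp only [mem_insert, forall_eq_or_imp, true_or, true_and]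
      exact ⟨Or.inr hbe, fun f hf => Or.inr (hini f hf)⟩
    · simp only [mem_insert, forall_eq_or_imp, Γ.bar_invol, true_or, or_true, true_and]
      exact fun f hf => Or.inr (Or.inr (hbar f hf))

end LGraph

/-- The path `e 0, …, e (n - 1)`; the later values of `e` play no role. -/
structure ImmersedPath (k n : ℕ) where
  G : LGraph k
  e : ℕ → G.E
  ini_succ : ∀ i, i + 1 < n → G.ini (e (i + 1)) = G.ini (G.bar (e i))
  succ_ne_bar : ∀ i, i + 1 < n → e (i + 1) ≠ G.bar (e i)

namespace ImmersedPath

variable {n : ℕ}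

section

variable (P : ImmersedPath k n)

def vtx : ℕ → P.G.V
  | 0 => P.G.ini (P.e 0)
  | t + 1 => P.G.ini (P.G.bar (P.e t))

lemma ini_e {i : ℕ} (hi : i < n) : P.G.ini (P.e i) = P.vtx i := by
  cases i with
  | zero => rfl
  | succ t => exact P.ini_succ t hi

def letter (i : ℕ) : Letter k := P.G.lab (P.e i)

lemma letter_succ_ne_linv {i : ℕ} (hi : i + 1 < n) : P.letter (i + 1) ≠ linv (P.letter i) :=
  fun h => P.succ_ne_bar i hi (P.G.folded _ _ (P.ini_succ i hi) (h.trans (P.G.lab_bar _).symm))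

lemma exists_traversal (i : ℕ) : ∃ j, P.e j = P.e i ∨ P.e j = P.G.bar (P.e i) :=
  ⟨i, Or.inl rfl⟩

noncomputable def firstTraversal (i : ℕ) : ℕ := Nat.find (P.exists_traversal i)

lemma firstTraversal_le (i : ℕ) : P.firstTraversal i ≤ i :=
  Nat.find_min' _ (Or.inl rfl)

lemma firstTraversal_spec (i : ℕ) :
    P.e (P.firstTraversal i) = P.e i ∨ P.e (P.firstTraversal i) = P.G.bar (P.e i) :=
  Nat.find_spec (P.exists_traversal i)

lemma firstTraversal_eq_of {s t : ℕ} (h : P.e s = P.e t ∨ P.e s = P.G.bar (P.e t)) :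
    P.firstTraversal s = P.firstTraversal t := by
  have key : ∀ j, (P.e j = P.e s ∨ P.e j = P.G.bar (P.e s)) ↔
      (P.e j = P.e t ∨ P.e j = P.G.bar (P.e t)) := by
    intro j
    rcases h with h | h
    · rw [h]
    · rw [h, P.G.bar_invol, or_comm]
  exact le_antisymm (Nat.find_mono fun j => (key j).2) (Nat.find_mono fun j => (key j).1)

def IsNew (i : ℕ) : Prop := P.firstTraversal i = i

lemma isNew_firstTraversal (i : ℕ) : P.IsNew (P.firstTraversal i) :=
  P.firstTraversal_eq_of (P.firstTraversal_spec i)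

lemma firstTraversal_lt {i : ℕ} (h : ¬ P.IsNew i) : P.firstTraversal i < i :=
  lt_of_le_of_ne (P.firstTraversal_le i) h

def germ (c : ℕ × Bool) : P.G.E := bif c.2 then P.G.bar (P.e c.1) else P.e c.1

lemma bar_germ (c : ℕ × Bool) : P.G.bar (P.germ c) = P.germ (c.1, !c.2) := by
  obtain ⟨t, b⟩ := c
  cases b <;> simp [germ, P.G.bar_invol]

lemma ini_germ {c : ℕ × Bool} (hc : c.1 < n) :
    P.G.ini (P.germ c) = P.vtx (c.1 + c.2.toNat) := by
  obtain ⟨t, b⟩ := c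
  cases b
  · simp [germ, P.ini_e hc]
  · rfl

lemma lab_germ (c : ℕ × Bool) :
    P.G.lab (P.germ c) = bif c.2 then linv (P.letter c.1) else P.letter c.1 := by
  obtain ⟨t, b⟩ := c
  cases b <;> simp [germ, letter, P.G.lab_bar]

lemma germ_injOn : Set.InjOn P.germ {c | P.IsNew c.1} := by
  rintro ⟨t, b⟩ (ht : P.IsNew t) ⟨t', b'⟩ (ht' : P.IsNew t') h
  have hedge : P.e t = P.e t' ∨ P.e t = P.G.bar (P.e t') := by
    cases b <;> cases b' <;> simp only [germ, cond_true, cond_false] at h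
    · exact Or.inl h
    · exact Or.inr h
    · exact Or.inr (by rw [← h, P.G.bar_invol])
    · exact Or.inl (P.G.bar_injective h)
  obtain rfl : t = t' := ht.symm.trans ((P.firstTraversal_eq_of hedge).trans ht')
  cases b <;> cases b' <;> simp only [germ, cond_true, cond_false] at h
  · rfl
  · exact absurd h.symm (P.G.bar_ne _)
  · exact absurd h (P.G.bar_ne _)
  · rfl

/-- Names the oriented edge of step `i` by times only, so that it can be compared across paths in
different graphs. -/
noncomputable def germCode (i : ℕ) : ℕ × Bool :=
  (P.firstTraversal i, decide (P.e (P.firstTraversal i) ≠ P.e i))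

lemma germ_germCode (i : ℕ) : P.germ (P.germCode i) = P.e i := by
  by_cases h : P.e (P.firstTraversal i) = P.e i
  · simp [germ, germCode, h]
  · simp [germ, germCode, (P.firstTraversal_spec i).resolve_left h, P.G.bar_invol,
      P.G.bar_ne]

lemma germCode_of_isNew {i : ℕ} (h : P.IsNew i) : P.germCode i = (i, false) := by
  simp [germCode, show P.firstTraversal i = i from h]

lemma letter_eq_lab_germCode (i : ℕ) : P.letter i = P.G.lab (P.germ (P.germCode i)) := by
  rw [germ_germCode, letter]

noncomputable def firstVisit (t : ℕ) : ℕ := Nat.find (⟨t, rfl⟩ : ∃ s, P.vtx s = P.vtx t)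

lemma firstVisit_le (t : ℕ) : P.firstVisit t ≤ t := Nat.find_min' _ rfl

lemma vtx_firstVisit (t : ℕ) : P.vtx (P.firstVisit t) = P.vtx t :=
  Nat.find_spec (⟨t, rfl⟩ : ∃ s, P.vtx s = P.vtx t)

lemma firstVisit_eq_iff {s t : ℕ} : P.firstVisit s = P.firstVisit t ↔ P.vtx s = P.vtx t := by
  refine ⟨fun h => by rw [← P.vtx_firstVisit s, h, P.vtx_firstVisit], fun h => ?_⟩
  exact le_antisymm (Nat.find_mono fun j hj => hj.trans h.symm)
    (Nat.find_mono fun j hj => hj.trans h)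

lemma firstVisit_firstVisit (t : ℕ) : P.firstVisit (P.firstVisit t) = P.firstVisit t :=
  P.firstVisit_eq_iff.mpr (P.vtx_firstVisit t)

lemma vtx_succ {i : ℕ} (hi : i < n) :
    P.vtx (i + 1) = P.vtx ((P.germCode i).1 + (!(P.germCode i).2).toNat) := by
  have hc : (P.germCode i).1 < n := (P.firstTraversal_le i).trans_lt hi
  rw [← P.ini_germ (c := ((P.germCode i).1, !(P.germCode i).2)) hc, ← P.bar_germ,
    P.germ_germCode]
  rfl

lemma firstVisit_succ_le_of_not_isNew {i : ℕ} (hi : i < n) (h : ¬ P.IsNew i) :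
    P.firstVisit (i + 1) ≤ i := by
  have := P.firstVisit_eq_iff.mpr (P.vtx_succ hi)
  have := P.firstVisit_le ((P.germCode i).1 + (!(P.germCode i).2).toNat)
  have := P.firstTraversal_lt h
  have := Bool.toNat_le (!(P.germCode i).2)
  simp only [germCode] at *
  omega

def IsMerge (i : ℕ) : Prop := P.IsNew i ∧ P.firstVisit (i + 1) ≠ i + 1

noncomputable def knownGermsAt (i : ℕ) : Finset (ℕ × Bool) :=
  {c ∈ range i ×ˢ univ | P.IsNew c.1 ∧ P.firstVisit (c.1 + c.2.toNat) = P.firstVisit i}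

lemma germCode_mem_knownGermsAt {i : ℕ} (hi : i < n) (h : ¬ P.IsNew i) :
    P.germCode i ∈ P.knownGermsAt i := by
  have hlt := P.firstTraversal_lt h
  simp only [knownGermsAt, mem_filter, mem_product, mem_range, mem_univ, and_true]
  refine ⟨hlt, P.isNew_firstTraversal i, P.firstVisit_eq_iff.mpr ?_⟩
  rw [← P.ini_germ (hlt.trans hi), P.germ_germCode, P.ini_e hi]

lemma card_knownGermsAt_le {i : ℕ} (hi : i < n) : #(P.knownGermsAt i) ≤ P.G.deg (P.vtx i) := by
  rw [LGraph.deg, Nat.card_eq_fintype_card, Fintype.card_subtype]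
  refine card_le_card_of_injOn P.germ (fun c hc => ?_) fun c hc c' hc' =>
    P.germ_injOn (mem_filter.mp hc).2.1 (mem_filter.mp hc').2.1
  simp only [knownGermsAt, coe_filter, mem_product, mem_range, mem_univ, and_true,
    Set.mem_ofPred_eq] at hc
  simp only [coe_filter, mem_univ, true_and, Set.mem_ofPred_eq]
  rw [P.ini_germ (hc.1.trans hi), ← P.firstVisit_eq_iff.mp hc.2.2]

noncomputable def stepCode (i : ℕ) : ℕ :=
  if P.IsNew i then (if P.firstVisit (i + 1) = i + 1 then 0 else 1)
  else 2 + (P.knownGermsAt i).toList.idxOf (P.germCode i)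

lemma isNew_iff_stepCode_lt (i : ℕ) : P.IsNew i ↔ P.stepCode i < 2 := by
  unfold stepCode
  split_ifs <;> simp_all
  omega

lemma isMerge_iff_stepCode_eq (i : ℕ) : P.IsMerge i ↔ P.stepCode i = 1 := by
  unfold stepCode IsMerge
  split_ifs <;> simp_all
  omega

lemma stepCode_lt {i : ℕ} (hi : i < n) : P.stepCode i < P.G.deg (P.vtx i) + 2 := by
  unfold stepCode
  split_ifs with h
  · omega
  · omega
  · have := List.idxOf_lt_length_of_mem (mem_toList.mpr (P.germCode_mem_knownGermsAt hi h))
    rw [length_toList] at this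
    have := P.card_knownGermsAt_le hi
    omega

noncomputable def newLetterCode (i : ℕ) : ℕ := otherIdx (linv (P.letter (i - 1))) (P.letter i)

noncomputable def newTimes : Finset ℕ := {i ∈ range n | P.IsNew i}

noncomputable def mergeTimes : Finset ℕ := {i ∈ range n | P.IsMerge i}

noncomputable def visited : Finset P.G.V := (range (n + 1)).image P.vtx

lemma two_mul_card_newTimes_add_le :
    2 * #P.newTimes + 2 * #P.visitedᶜ ≤ Fintype.card P.G.E := by
  have hF : #((P.newTimes ×ˢ univ).image P.germ) = 2 * #P.newTimes := by
    have hinj : Set.InjOn P.germ ((P.newTimes ×ˢ univ : Finset (ℕ × Bool)) : Set (ℕ × Bool)) :=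
      P.germ_injOn.mono fun c hc =>
        (mem_filter.mp (mem_product.mp (mem_coe.mp hc)).1).2
    rw [card_image_of_injOn hinj, card_product, card_univ, Fintype.card_bool, mul_comm]
  rw [← hF]
  refine P.G.card_add_two_mul_card_compl_le ⟨P.vtx 0, mem_image_of_mem _ (by simp)⟩ ?_ ?_
  · simp only [mem_image, mem_product, newTimes, mem_filter, mem_range, mem_univ, and_true]
    rintro _ ⟨c, ⟨hc, -⟩, rfl⟩
    have := Bool.toNat_le c.2
    exact P.ini_germ hc ▸ mem_image_of_mem _ (mem_range.mpr (by omega))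
  · simp only [mem_image, mem_product, mem_univ, and_true]
    rintro _ ⟨c, hc, rfl⟩
    exact ⟨(c.1, !c.2), hc, (P.bar_germ c).symm⟩

/-- Every visited vertex is first visited either at time `0` or right after a new step that is
not a merge. -/
lemma card_visited_add_card_mergeTimes : #P.visited + #P.mergeTimes = #P.newTimes + 1 := by
  have hvis : P.visited = {t ∈ range (n + 1) | P.firstVisit t = t}.image P.vtx := by
    refine Subset.antisymm (fun v hv => ?_) (image_subset_image (filter_subset _ _))
    obtain ⟨t, ht, rfl⟩ := mem_image.mp hv
    have := P.firstVisit_le t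
    exact mem_image.mpr ⟨P.firstVisit t, mem_filter.mpr ⟨by simp at ht ⊢; omega,
      P.firstVisit_firstVisit t⟩, P.vtx_firstVisit t⟩
  have hinj : Set.InjOn P.vtx
      (({t ∈ range (n + 1) | P.firstVisit t = t} : Finset ℕ) : Set ℕ) := by
    intro s hs t ht hst
    simp only [coe_filter, Set.mem_ofPred_eq] at hs ht
    rw [← hs.2, ← ht.2]
    exact P.firstVisit_eq_iff.mpr hst
  have hstep : ∀ i ∈ range n, ((if P.firstVisit (i + 1) = i + 1 then 1 else 0) +
      if P.IsMerge i then 1 else 0) = if P.IsNew i then 1 else 0 := by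
    intro i hi
    have := P.firstVisit_succ_le_of_not_isNew (mem_range.mp hi)
    unfold IsMerge
    split_ifs <;> simp_all
  rw [hvis, card_image_of_injOn hinj, newTimes, mergeTimes, card_filter, card_filter,
    card_filter, sum_range_succ', ← sum_congr rfl hstep, sum_add_distrib]
  have := Nat.le_zero.mp (P.firstVisit_le 0)
  simp only [this, if_true]
  ring

lemma card_newTimes_le_vol : #P.newTimes ≤ P.G.vol := by
  have := P.two_mul_card_newTimes_add_le
  rw [LGraph.vol, Nat.card_eq_fintype_card]
  omega

lemma card_mergeTimes_le_rank : #P.mergeTimes ≤ P.G.rank := by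
  have := P.two_mul_card_newTimes_add_le
  have := P.card_visited_add_card_mergeTimes
  have := card_le_univ P.visited
  rw [card_compl] at *
  rw [LGraph.rank, LGraph.vol, Nat.card_eq_fintype_card, Nat.card_eq_fintype_card]
  omega

lemma firstVisit_succ_lt_of_isMerge {i : ℕ} (hi : i < n) (h : P.IsMerge i) :
    P.firstVisit (i + 1) < n := by
  have := P.firstVisit_le (i + 1)
  have := h.2
  omega

end

structure SameCode (P Q : ImmersedPath k n) : Prop where
  stepCode_eq : ∀ i < n, P.stepCode i = Q.stepCode i
  letter_zero_eq : P.letter 0 = Q.letter 0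
  newLetterCode_eq : ∀ i < n, P.IsNew i → P.newLetterCode i = Q.newLetterCode i
  firstVisit_succ_eq_of_isMerge :
    ∀ i < n, P.IsMerge i → P.firstVisit (i + 1) = Q.firstVisit (i + 1)

def AgreeUpTo (P Q : ImmersedPath k n) (i : ℕ) : Prop :=
  (∀ s ≤ i, P.firstVisit s = Q.firstVisit s) ∧
    ∀ s < i, P.germCode s = Q.germCode s ∧ P.letter s = Q.letter s

namespace SameCode

variable {P Q : ImmersedPath k n} (h : SameCode P Q)
include h

lemma isNew_iff {i : ℕ} (hi : i < n) : P.IsNew i ↔ Q.IsNew i := by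
  rw [isNew_iff_stepCode_lt, isNew_iff_stepCode_lt, h.stepCode_eq i hi]

lemma isMerge_iff {i : ℕ} (hi : i < n) : P.IsMerge i ↔ Q.IsMerge i := by
  rw [isMerge_iff_stepCode_eq, isMerge_iff_stepCode_eq, h.stepCode_eq i hi]

lemma knownGermsAt_eq {i : ℕ} (hi : i < n) (hfv : ∀ s ≤ i, P.firstVisit s = Q.firstVisit s) :
    P.knownGermsAt i = Q.knownGermsAt i := by
  refine filter_congr fun c hc => ?_
  have hc : c.1 < i := by simpa using hc
  have := Bool.toNat_le c.2
  rw [h.isNew_iff (hc.trans hi), hfv _ (by omega), hfv i le_rfl]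

lemma germCode_eq {i : ℕ} (hi : i < n) (hA : AgreeUpTo P Q i) : P.germCode i = Q.germCode i := by
  by_cases hnew : P.IsNew i
  · rw [P.germCode_of_isNew hnew, Q.germCode_of_isNew ((h.isNew_iff hi).mp hnew)]
  have hnew' : ¬ Q.IsNew i := fun h' => hnew ((h.isNew_iff hi).mpr h')
  have hK := h.knownGermsAt_eq hi hA.1
  have hidx := h.stepCode_eq i hi
  simp only [stepCode, if_neg hnew, if_neg hnew', hK, Nat.add_left_cancel_iff] at hidx
  exact (List.idxOf_inj (mem_toList.mpr (hK ▸ P.germCode_mem_knownGermsAt hi hnew))).mp hidx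

lemma letter_eq {i : ℕ} (hi : i < n) (hA : AgreeUpTo P Q i) : P.letter i = Q.letter i := by
  by_cases hnew : P.IsNew i
  · rcases i with _ | j
    · exact h.letter_zero_eq
    have hj := (hA.2 j (by omega)).2
    have hcode := h.newLetterCode_eq _ hi hnew
    simp only [newLetterCode, Nat.add_sub_cancel, hj] at hcode
    exact eq_of_otherIdx_eq (hj ▸ P.letter_succ_ne_linv hi) (Q.letter_succ_ne_linv hi) hcode
  · have hlt := P.firstTraversal_lt hnew
    rw [P.letter_eq_lab_germCode, Q.letter_eq_lab_germCode, P.lab_germ, Q.lab_germ,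
      ← h.germCode_eq hi hA, (hA.2 (P.germCode i).1 hlt).2]

lemma firstVisit_succ_eq {i : ℕ} (hi : i < n) (hA : AgreeUpTo P Q i) :
    P.firstVisit (i + 1) = Q.firstVisit (i + 1) := by
  by_cases hnew : P.IsNew i
  · by_cases hm : P.IsMerge i
    · exact h.firstVisit_succ_eq_of_isMerge i hi hm
    · have hm' : ¬ Q.IsMerge i := fun h' => hm ((h.isMerge_iff hi).mpr h')
      simp only [IsMerge, not_and, not_not] at hm hm'
      rw [hm hnew, hm' ((h.isNew_iff hi).mp hnew)]
  · have hlt := P.firstTraversal_lt hnew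
    rw [P.firstVisit_eq_iff.mpr (P.vtx_succ hi), Q.firstVisit_eq_iff.mpr (Q.vtx_succ hi),
      ← h.germCode_eq hi hA]
    have := Bool.toNat_le (!(P.germCode i).2)
    exact hA.1 _ (by simp only [germCode] at *; omega)

lemma agreeUpTo {i : ℕ} (hi : i ≤ n) : AgreeUpTo P Q i := by
  induction i with
  | zero =>
    refine ⟨fun s hs => ?_, by simp⟩
    rw [Nat.le_zero.mp hs, Nat.le_zero.mp (P.firstVisit_le 0), Nat.le_zero.mp (Q.firstVisit_le 0)]
  | succ i ih =>
    have hA := ih (by omega)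
    refine ⟨fun s hs => ?_, fun s hs => ?_⟩
    · rcases Nat.lt_or_ge s (i + 1) with hs' | hs'
      · exact hA.1 s (by omega)
      · obtain rfl : s = i + 1 := by omega
        exact h.firstVisit_succ_eq (by omega) hA
    · rcases Nat.lt_or_ge s i with hs' | hs'
      · exact hA.2 s hs'
      · obtain rfl : s = i := by omega
        exact ⟨h.germCode_eq (by omega) hA, h.letter_eq (by omega) hA⟩

lemma letter_eq_of_lt {i : ℕ} (hi : i < n) : P.letter i = Q.letter i :=
  ((h.agreeUpTo le_rfl).2 i hi).2

end SameCode

noncomputable def code (P : ImmersedPath k n) (m L : ℕ) :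
    (Fin n → ℕ) × Letter k × (Fin m → ℕ) × (Fin L → ℕ) :=
  (fun i => P.stepCode i, P.letter 0, pack P.newTimes P.newLetterCode,
    pack P.mergeTimes fun i => P.firstVisit (i + 1))

variable (k n) in
noncomputable def codeSet (m L : ℕ) :
    Finset ((Fin n → ℕ) × Letter k × (Fin m → ℕ) × (Fin L → ℕ)) :=
  Fintype.piFinset (fun _ => range (6 * L)) ×ˢ univ ×ˢ
    Fintype.piFinset (fun _ => range (2 * k - 1)) ×ˢ Fintype.piFinset fun _ => range n

lemma card_codeSet (m L : ℕ) :
    #(codeSet k n m L) = (6 * L) ^ n * (2 * k * ((2 * k - 1) ^ m * n ^ L)) := by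
  simp [codeSet, card_product, Fintype.card_piFinset, mul_comm]

lemma card_codeSet_le {m L : ℕ} {μ : ℝ} (hμ : 0 < μ) (hk : 0 < k) (hm : (m : ℝ) ≤ μ * n)
    (hμn : 1 ≤ μ * n) :
    (#(codeSet k n m L) : ℝ) ≤
      2 * k / μ ^ L * (μ * n) ^ (3 * L + 1) * (6 * L) ^ n * (2 * k - 1) ^ (μ * n) := by
  have hbase : (1 : ℝ) ≤ 2 * k - 1 := by
    have : (1 : ℝ) ≤ k := by exact_mod_cast hk
    linarith
  have hletters : ((2 * k - 1 : ℕ) : ℝ) ^ m ≤ (2 * k - 1) ^ (μ * n) := by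
    rw [Nat.cast_sub (by omega), ← Real.rpow_natCast]
    push_cast
    exact Real.rpow_le_rpow_of_exponent_le hbase hm
  have htargets : (n : ℝ) ^ L ≤ (μ * n) ^ (3 * L + 1) / μ ^ L := by
    rw [le_div_iff₀ (by positivity), ← mul_pow, mul_comm]
    exact pow_le_pow_right₀ hμn (by omega)
  calc (#(codeSet k n m L) : ℝ)
      = (6 * L) ^ n * (2 * k * (((2 * k - 1 : ℕ) : ℝ) ^ m * (n : ℝ) ^ L)) := by
        rw [card_codeSet]; push_cast; ring
    _ ≤ (6 * L) ^ n * (2 * k * ((2 * k - 1) ^ (μ * n) * ((μ * n) ^ (3 * L + 1) / μ ^ L))) := by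
      gcongr
    _ = _ := by ring

variable {m L : ℕ} {P Q : ImmersedPath k n}

lemma code_mem_codeSet (hL : 2 ≤ L) (hk : 0 < k) (hn : 0 < n) (hrank : P.G.rank ≤ L)
    (hleaf : Nat.card {v // P.G.deg v = 1} ≤ 2) : P.code m L ∈ codeSet k n m L := by
  simp only [code, codeSet, mem_product, Fintype.mem_piFinset, mem_range, mem_univ, true_and]
  refine ⟨fun i => ?_, pack_lt (N := 2 * k - 1) (by omega) fun i _ => otherIdx_lt hk _ _,
    pack_lt hn fun i hi => P.firstVisit_succ_lt_of_isMerge (mem_range.mp (mem_filter.mp hi).1)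
      (mem_filter.mp hi).2⟩
  have := P.stepCode_lt i.2
  have := P.G.deg_le_two_mul_rank_add_three hleaf (P.vtx i)
  omega

lemma sameCode_of_code_eq (hvol : P.G.vol ≤ m) (hrank : P.G.rank ≤ L)
    (h : P.code m L = Q.code m L) : SameCode P Q := by
  simp only [code, Prod.mk.injEq] at h
  obtain ⟨hstep, hzero, hnew, hmerge⟩ := h
  have hstep' : ∀ i < n, P.stepCode i = Q.stepCode i := fun i hi => congrFun hstep ⟨i, hi⟩
  have hT : P.newTimes = Q.newTimes := filter_congr fun i hi => by
    rw [isNew_iff_stepCode_lt, isNew_iff_stepCode_lt, hstep' i (mem_range.mp hi)]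
  have hM : P.mergeTimes = Q.mergeTimes := filter_congr fun i hi => by
    rw [isMerge_iff_stepCode_eq, isMerge_iff_stepCode_eq, hstep' i (mem_range.mp hi)]
  rw [← hT] at hnew
  rw [← hM] at hmerge
  refine ⟨hstep', hzero, fun i hi hi' => ?_, fun i hi hi' => ?_⟩
  · exact eqOn_of_pack_eq (P.card_newTimes_le_vol.trans hvol) hnew
      (mem_filter.mpr ⟨mem_range.mpr hi, hi'⟩)
  · exact eqOn_of_pack_eq (P.card_mergeTimes_le_rank.trans hrank) hmerge
      (mem_filter.mpr ⟨mem_range.mpr hi, hi'⟩)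

end ImmersedPath

theorem gam_le_card_codeSet {Q : Set (List (Letter k))} {n m L : ℕ}
    (hL : 2 ≤ L) (hk : 0 < k) (hn : 0 < n)
    (hQ : ∀ w ∈ Q, w.length = n → ∃ P : ImmersedPath k n, P.G.rank ≤ L ∧
      Nat.card {v // P.G.deg v = 1} ≤ 2 ∧ P.G.vol ≤ m ∧ ∀ i (hi : i < w.length), P.letter i = w[i]) :
    gam Q n ≤ #(ImmersedPath.codeSet k n m L) := by
  choose P hrank hleaf hvol hletter using fun w : {w // w ∈ Q ∧ w.length = n} => hQ w w.2.1 w.2.2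
  let f (w : {w // w ∈ Q ∧ w.length = n}) : ImmersedPath.codeSet k n m L :=
    ⟨(P w).code m L, ImmersedPath.code_mem_codeSet hL hk hn (hrank w) (hleaf w)⟩
  have hf : Function.Injective f := fun w w' h => by
    have hsame := ImmersedPath.sameCode_of_code_eq (hvol w) (hrank w) (congrArg Subtype.val h)
    refine Subtype.ext (List.ext_getElem (w.2.2.trans w'.2.2.symm) fun i hi hi' => ?_)
    rw [← hletter w i hi, ← hletter w' i hi',
      hsame.letter_eq_of_lt (w.2.2 ▸ hi)]
  simpa [gam] using Nat.card_le_card_of_injective f hf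

lemma MuLReadable.exists_immersedPath {μ : ℝ} {L : ℕ} {w : List (Letter k)}
    (h : MuLReadable μ L w) :
    ∃ P : ImmersedPath k w.length, P.G.rank ≤ L ∧ Nat.card {v // P.G.deg v = 1} ≤ 2 ∧
      P.G.vol ≤ ⌊μ * w.length⌋₊ ∧ ∀ i (hi : i < w.length), P.letter i = w[i] := by
  obtain ⟨Γ, hrank, -, hleaf, ⟨p, hpath, hlab⟩, hvol⟩ := h
  exact ⟨⟨Γ, p, fun i hi => (hpath i hi).1, fun i hi => (hpath i hi).2⟩, hrank, hleaf,
    Nat.le_floor hvol, fun i hi => by simpa [ImmersedPath.letter] using hlab i hi⟩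

lemma MuLReadable.one_le_mul_length {μ : ℝ} {L : ℕ} {w : List (Letter k)}
    (h : MuLReadable μ L w) : 1 ≤ μ * w.length := by
  obtain ⟨Γ, -, -, -, ⟨p, -, -⟩, hvol⟩ := h
  have : 2 ≤ Nat.card Γ.E := Finite.one_lt_card_iff_nontrivial.mpr
    ⟨p 0, Γ.bar (p 0), (Γ.bar_ne (p 0)).symm⟩
  have : 1 ≤ Γ.vol := by unfold LGraph.vol; omega
  exact le_trans (by exact_mod_cast this) hvol

theorem stmt12_general (k L : ℕ) (hL : 2 ≤ L) (hLk : L < k)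
    (μ : ℝ) (hμ0 : 0 < μ) :
    ∃ C : ℝ, 0 < C ∧ ∀ n : ℕ, 1 ≤ n →
      (gam {w | w ∈ Ck k ∧ MuLReadable μ L w} n : ℝ) ≤
        C * (μ * n) ^ (3 * L + 1) * (6 * (L : ℝ)) ^ n * (2 * (k : ℝ) - 1) ^ (μ * n) := by
  have hk : (1 : ℝ) ≤ k := by exact_mod_cast (show 1 ≤ k by omega)
  refine ⟨2 * k / μ ^ L, by positivity, fun n hn => ?_⟩
  rcases (gam {w | w ∈ Ck k ∧ MuLReadable μ L w} n).eq_zero_or_pos with h0 | hpos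
  · rw [h0, Nat.cast_zero]
    exact mul_nonneg (by positivity) (Real.rpow_nonneg (by linarith) _)
  obtain ⟨⟨w, ⟨-, hw⟩, hlen⟩⟩ := (Nat.card_pos_iff.mp hpos).1
  have hcount := gam_le_card_codeSet (Q := {w | w ∈ Ck k ∧ MuLReadable μ L w})
    (m := ⌊μ * n⌋₊) hL (by omega) hn fun w' hw' hlen' => by
      subst hlen'; exact hw'.2.exists_immersedPath
  refine (Nat.cast_le.mpr hcount).trans
    (ImmersedPath.card_codeSet_le hμ0 (by omega) (Nat.floor_le (by positivity)) ?_)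
  exact hlen ▸ hw.one_le_mul_length

/-- For 2 ≤ L < k and 0 < μ < 1, the number of (μ,L)-readable cyclically reduced words
of length n is at most C(μn)^{3L+1}(6L)ⁿ(2k-1)^{μn} for a constant C independent of n. -/
theorem stmt12 (k L : ℕ) (hL : 2 ≤ L) (hLk : L < k)
    (μ : ℝ) (hμ0 : 0 < μ) (hμ1 : μ < 1) :
    ∃ C : ℝ, 0 < C ∧ ∀ n : ℕ, 1 ≤ n →
      (gam {w | w ∈ Ck k ∧ MuLReadable μ L w} n : ℝ) ≤
        C * (μ * n) ^ (3 * L + 1) * (6 * (L : ℝ)) ^ n * (2 * (k : ℝ) - 1) ^ (μ * n) :=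
  stmt12_general k L hL hLk μ hμ0
end
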